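/- For every positive integer s, d₄(21s, 3) = 16s − 1; that is, there exists a quaternary Hermitian LCD [21s, 3] code with minimum weight 16s−1, and every quaternary Hermitian LCD [21s, 3] code has minimum weight at most 16s−1. -/

import Mathlib

open scoped Classical

noncomputable section

/-- The finite field with four elements. -/
abbrev F4 := GaloisField 2 2

/-- The (Hamming) weight of a vector over `F4`: the number of nonzero coordinates. -/
def wt {n : ℕ} (x : Fin n → F4) : ℕ :=
  (Finset.univ.filter (fun i => x i ≠ 0)).card

/-- Hermitian inner product on `F4^n`: `∑ i, x i * (conj (y i))` with `conj z = z^2`. -/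
def hermInner {n : ℕ} (x y : Fin n → F4) : F4 :=
  ∑ i, x i * (y i) ^ 2

/-- Membership in the Hermitian dual `C^{⊥H}` of a code `C`. -/
def inHermDual {n : ℕ} (C : Submodule F4 (Fin n → F4)) (x : Fin n → F4) : Prop :=
  ∀ y ∈ C, hermInner x y = 0

/-- `C` is Hermitian LCD: `C ∩ C^{⊥H} = {0}`. -/
def IsHermLCD {n : ℕ} (C : Submodule F4 (Fin n → F4)) : Prop :=
  ∀ x ∈ C, inHermDual C x → x = 0

/-- `C` has minimum weight (exactly) `d`. -/
def minWtIs {n : ℕ} (C : Submodule F4 (Fin n → F4)) (d : ℕ) : Prop :=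
  (∃ x ∈ C, x ≠ 0 ∧ wt x = d) ∧ ∀ x ∈ C, x ≠ 0 → d ≤ wt x

/-- `C` is a quaternary Hermitian LCD `[n,k,d]` code. -/
def IsHermLCDCode (n k d : ℕ) (C : Submodule F4 (Fin n → F4)) : Prop :=
  Module.finrank F4 C = k ∧ IsHermLCD C ∧ minWtIs C d

/-- `d₄(n,k) = d`: the largest minimum weight among quaternary Hermitian LCD `[n,k]` codes
is `d`. -/
def d4Is (n k d : ℕ) : Prop :=
  (∃ C : Submodule F4 (Fin n → F4), IsHermLCDCode n k d C) ∧
  (∀ C : Submodule F4 (Fin n → F4), Module.finrank F4 C = k → IsHermLCD C →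
    ∃ x ∈ C, x ≠ 0 ∧ wt x ≤ d)

end

/-!
A 3-dimensional code of length `n` is the range of `a ↦ M *ᵥ a` for a matrix
`M : Matrix (Fin n) (Fin 3) 𝔽₄` (a transposed generator matrix). The codeword of `a` vanishes
exactly at the rows of `M` orthogonal to `a`, and the Hermitian inner product of the codewords
of `a` and `b` is `∑ i, (M i ⬝ᵥ a) (M i ⬝ᵥ b)²`.

Upper bound: if every nonzero codeword of a `[21s, 3]` code had weight at least `16s`, each
nonzero `a` would have at most `5s` orthogonal rows. Double counting the pairs (`a`, row
orthogonal to `a`), first over all `a` and then over the `a` orthogonal to a fixed `y ≠ 0`,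
forces the rows to be nonzero and every line of `𝔽₄³` to contain exactly `s` of them. The code
is then `s` copies of the simplex code up to scalars; since `c³ = 1` for `c ∈ 𝔽₄ˣ`, its Hermitian
form is `s` times the sum of the cubic form `(v ⬝ᵥ a) (v ⬝ᵥ b)²` over `𝔽₄³`, which vanishes
(Chevalley–Warning), so the code lies in its Hermitian dual.

Construction: take one representative of each of the 21 points of `ℙ²(𝔽₄)`, `s` times, and in
one copy replace the points `(1,1,0)` and `(0,0,1)` by `(1,0,0)` and `(0,1,0)`. This raises the
number of zeros of a nonzero codeword from `5s` by at most one, and turns the Hermitian form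
into the nondegenerate `a₀ b₁² + a₁ b₀² + a₂ b₂²`.
-/

open Finset Matrix Module Submodule
open scoped LinearAlgebra.Projectivization

section OrthogonalCount

variable {k : Type*} [Field k] [Fintype k] {m : ℕ}

theorem card_filter_forall_dotProduct_eq_zero {r : ℕ} (w : Fin r → Fin m → k) :
    #{a | ∀ j, w j ⬝ᵥ a = 0} = Fintype.card k ^ (m - finrank k (span k (Set.range w))) := by
  have hker : #{a | ∀ j, w j ⬝ᵥ a = 0} = Fintype.card (LinearMap.ker (of w).mulVecLin) := by
    rw [Fintype.card_subtype]
    simp only [LinearMap.mem_ker, mulVecLin_apply, funext_iff]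
    rfl
  have hrank := (of w).mulVecLin.finrank_range_add_finrank_ker
  rw [← Matrix.rank, rank_eq_finrank_span_row, finrank_fin_fun] at hrank
  rw [hker, Module.card_eq_pow_finrank (K := k)]
  exact congrArg _ (Nat.sub_eq_of_eq_add' hrank.symm).symm

theorem card_filter_dotProduct_eq_zero (v : Fin m → k) :
    #{a | v ⬝ᵥ a = 0} = if v = 0 then Fintype.card k ^ m else Fintype.card k ^ (m - 1) := by
  have := card_filter_forall_dotProduct_eq_zero ![v]
  simp only [Fin.forall_fin_one, cons_val_zero] at this
  rw [this, show Set.range ![v] = {v} by simp]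
  split_ifs with hv
  · rw [hv, span_zero_singleton, finrank_bot, Nat.sub_zero]
  · rw [finrank_span_singleton hv]

theorem card_filter_dotProduct_eq_zero_and {y : Fin m → k} (hy : y ≠ 0) (v : Fin m → k) :
    #{a | y ⬝ᵥ a = 0 ∧ v ⬝ᵥ a = 0} =
      if v ∈ k ∙ y then Fintype.card k ^ (m - 1) else Fintype.card k ^ (m - 2) := by
  have := card_filter_forall_dotProduct_eq_zero ![v, y]
  simp only [Fin.forall_fin_two, cons_val_zero, cons_val_one, and_comm] at this
  rw [this]
  split_ifs with hv
  · rw [show Set.range ![v, y] = insert v {y} by simp [Set.pair_comm],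
      span_insert_eq_span hv, finrank_span_singleton hy]
  · have hli : LinearIndependent k ![v, y] :=
      linearIndependent_finCons.mpr ⟨linearIndependent_unique_iff.mpr hy, by simpa using hv⟩
    rw [finrank_span_eq_card hli, Fintype.card_fin]

end OrthogonalCount

namespace Projectivization

variable {k V M : Type*} [Field k] [AddCommGroup V] [Module k V] {φ : V → M}

theorem comp_rep_mk (hφ : ∀ (c : kˣ) v, φ (c • v) = φ v) {v : V} (hv : v ≠ 0) :
    φ (mk k v hv).rep = φ v := by
  obtain ⟨c, hc⟩ := exists_smul_eq_mk_rep k v hv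
  rw [← hc, hφ]

variable [AddCommMonoid M] [Fintype (ℙ k V)]

theorem sum_eq_add_card_units_smul_sum_rep [Fintype k] [Fintype V]
    (hφ : ∀ (c : kˣ) v, φ (c • v) = φ v) :
    ∑ v, φ v = φ 0 + Fintype.card kˣ • ∑ p : ℙ k V, φ p.rep := by
  let e := nonZeroEquivProjectivizationProdUnits k V
  rw [Fintype.sum_eq_add_sum_subtype_ne φ 0, ← e.symm.sum_comp, Fintype.sum_prod_type, smul_sum]
  congr 1
  refine sum_congr rfl fun p _ => ?_
  rw [← card_univ, ← sum_const]
  refine sum_congr rfl fun c _ => ?_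
  have hp : mk k (e.symm (p, c)).1 (e.symm (p, c)).2 = p :=
    congrArg Prod.fst (e.apply_symm_apply (p, c))
  rw [← comp_rep_mk hφ (e.symm (p, c)).2, hp]

theorem sum_comp_eq_sum_card_smul_rep {ι : Type*} [Fintype ι] {g : ι → V} (hg : ∀ i, g i ≠ 0)
    (hφ : ∀ (c : kˣ) v, φ (c • v) = φ v) :
    ∑ i, φ (g i) = ∑ p : ℙ k V, #{i | mk k (g i) (hg i) = p} • φ p.rep := by
  rw [← sum_fiberwise univ fun i => mk k (g i) (hg i)]
  refine sum_congr rfl fun p _ => ?_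
  rw [← sum_const]
  refine sum_congr rfl fun i hi => ?_
  rw [← (mem_filter.mp hi).2, comp_rep_mk hφ]

end Projectivization

noncomputable instance : Fintype F4 := Fintype.ofFinite F4

theorem F4.card_eq_four : Fintype.card F4 = 4 := by
  simpa using GaloisField.card 2 2 (by norm_num)

theorem F4.card_units : Fintype.card F4ˣ = 3 := by
  rw [Fintype.card_units, F4.card_eq_four]

theorem F4.three_nsmul (x : F4) : 3 • x = x := by
  rw [succ_nsmul, two_nsmul, CharTwo.add_self_eq_zero, zero_add]

noncomputable instance : Fintype (ℙ F4 (Fin 3 → F4)) := Fintype.ofFinite _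

theorem F4.card_projectivization : Fintype.card (ℙ F4 (Fin 3 → F4)) = 21 := by
  rw [Fintype.card_eq_nat_card, Projectivization.card_of_finrank F4 _ (finrank_fin_fun F4),
    Nat.card_eq_fintype_card, F4.card_eq_four]
  rfl

theorem card_filter_rep_dotProduct_eq_zero {a : Fin 3 → F4} (ha : a ≠ 0) :
    #{p : ℙ F4 (Fin 3 → F4) | p.rep ⬝ᵥ a = 0} = 5 := by
  have h := Projectivization.sum_eq_add_card_units_smul_sum_rep (k := F4) (V := Fin 3 → F4)
    (φ := fun v => if v ⬝ᵥ a = 0 then (1 : ℕ) else 0) fun c v => by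
      simp [Units.smul_def, smul_dotProduct]
  have h16 : #{v | v ⬝ᵥ a = 0} = 16 := by
    simpa [dotProduct_comm _ a, ha, F4.card_eq_four] using card_filter_dotProduct_eq_zero a
  rw [← card_filter, ← card_filter, h16, zero_dotProduct, if_pos rfl, F4.card_units,
    smul_eq_mul] at h
  omega

section HermitianForm

variable {m : ℕ}

noncomputable def hermTerm (a b v : Fin m → F4) : F4 := (v ⬝ᵥ a) * (v ⬝ᵥ b) ^ 2

theorem hermTerm_units_smul (a b : Fin m → F4) (c : F4ˣ) (v : Fin m → F4) :
    hermTerm a b (c • v) = hermTerm a b v := by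
  have hc : (c : F4) ^ 3 = 1 := by
    simpa [F4.card_eq_four] using FiniteField.pow_card_sub_one_eq_one (c : F4) c.ne_zero
  simp only [hermTerm, Units.smul_def, smul_dotProduct, smul_eq_mul]
  linear_combination (v ⬝ᵥ a) * (v ⬝ᵥ b) ^ 2 * hc

theorem sum_hermTerm_eq_zero (a b : Fin 3 → F4) : ∑ v, hermTerm a b v = 0 := by
  let L : (Fin 3 → F4) → MvPolynomial (Fin 3) F4 :=
    fun a => ∑ j, MvPolynomial.C (a j) * MvPolynomial.X j
  have hL : ∀ a v, MvPolynomial.eval v (L a) = v ⬝ᵥ a := by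
    intro a v
    simp [L, dotProduct, mul_comm]
  have hdeg : ∀ a, (L a).totalDegree ≤ 1 := fun a =>
    (MvPolynomial.totalDegree_finsetSum _ _).trans <| Finset.sup_le fun j _ =>
      (MvPolynomial.totalDegree_mul _ _).trans (by simp)
  have key := MvPolynomial.sum_eval_eq_zero (L a * L b ^ 2) <| by
    calc (L a * L b ^ 2).totalDegree ≤ 1 + 2 * 1 :=
          (MvPolynomial.totalDegree_mul _ _).trans <| add_le_add (hdeg a) <|
            (MvPolynomial.totalDegree_pow _ _).trans (Nat.mul_le_mul_left _ (hdeg b))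
      _ < (Fintype.card F4 - 1) * Fintype.card (Fin 3) := by simp [F4.card_eq_four]
  simpa [hermTerm, hL] using key

theorem sum_rep_hermTerm_eq_zero (a b : Fin 3 → F4) :
    ∑ p : ℙ F4 (Fin 3 → F4), hermTerm a b p.rep = 0 := by
  have h := Projectivization.sum_eq_add_card_units_smul_sum_rep (hermTerm_units_smul a b)
  rwa [sum_hermTerm_eq_zero, hermTerm, zero_dotProduct, zero_mul, zero_add, F4.card_units,
    F4.three_nsmul, eq_comm] at h

end HermitianForm

theorem exists_range_mulVecLin_eq {k : Type*} [Field k] {n m : ℕ} (C : Submodule k (Fin n → k))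
    (hC : finrank k C = m) : ∃ M : Matrix (Fin n) (Fin m) k, LinearMap.range M.mulVecLin = C := by
  let b := finBasisOfFinrankEq k C hC
  refine ⟨of fun i j => (b j : Fin n → k) i, ?_⟩
  rw [range_mulVecLin, show Set.range (of fun i j => (b j : Fin n → k) i).col =
      C.subtype '' Set.range b from Set.range_comp C.subtype b, span_image, b.span_eq,
    Submodule.map_top, range_subtype]

theorem LinearMap.injective_of_finrank_range_eq {k V W : Type*} [Field k] [AddCommGroup V]
    [Module k V] [FiniteDimensional k V] [AddCommGroup W] [Module k W] {f : V →ₗ[k] W}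
    (hf : finrank k (LinearMap.range f) = finrank k V) : Function.Injective f := by
  have := f.finrank_range_add_finrank_ker
  rw [← LinearMap.ker_eq_bot, ← Submodule.finrank_eq_zero]
  omega

namespace Matrix

variable {n m : ℕ} (M : Matrix (Fin n) (Fin m) F4)

theorem wt_mulVec_add_card_filter (a : Fin m → F4) :
    wt (M *ᵥ a) + #{i | M i ⬝ᵥ a = 0} = n := by
  have := card_filter_add_card_filter_not (s := univ) fun i => M i ⬝ᵥ a = 0
  rw [card_univ, Fintype.card_fin] at this
  rw [wt, add_comm]
  exact this

theorem hermInner_mulVec (a b : Fin m → F4) :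
    hermInner (M *ᵥ a) (M *ᵥ b) = ∑ i, hermTerm a b (M i) := rfl

theorem injective_mulVecLin_of_nondegenerate
    (h : ∀ a, (∀ b, ∑ i, hermTerm a b (M i) = 0) → a = 0) : Function.Injective M.mulVecLin := by
  rw [← LinearMap.ker_eq_bot, LinearMap.ker_eq_bot']
  intro a ha
  refine h a fun b => ?_
  rw [← hermInner_mulVec, ← mulVecLin_apply, ha]
  simp [hermInner]

theorem isHermLCD_range_mulVecLin_of_nondegenerate
    (h : ∀ a, (∀ b, ∑ i, hermTerm a b (M i) = 0) → a = 0) :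
    IsHermLCD (LinearMap.range M.mulVecLin) := by
  rintro _ ⟨a, rfl⟩ hdual
  rw [h a fun b => (hermInner_mulVec M a b).symm.trans (hdual _ ⟨b, rfl⟩), map_zero]

theorem not_isHermLCD_range_mulVecLin [NeZero m] (hM : Function.Injective M.mulVecLin)
    (h : ∀ a b, ∑ i, hermTerm a b (M i) = 0) : ¬ IsHermLCD (LinearMap.range M.mulVecLin) := by
  intro hlcd
  have hx := hlcd _ ⟨Pi.single 0 1, rfl⟩ <| by
    rintro _ ⟨b, rfl⟩
    exact (hermInner_mulVec M _ b).trans (h _ b)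
  exact one_ne_zero (congrFun (hM (hx.trans (map_zero _).symm)) 0)

end Matrix

section UpperBound

theorem sum_card_filter_comm {α β : Type*} [Fintype β] (S : Finset α) (r : β → α → Prop)
    [∀ i a, Decidable (r i a)] :
    ∑ a ∈ S, #{i | r i a} = ∑ i, #(S.filter (r i)) := by
  simp only [card_filter]
  exact sum_comm

theorem sum_ite_eq_zero_of_mem {α M : Type*} [Zero α] [DecidableEq α] [AddCommMonoid M]
    {S : Finset α} (h0 : 0 ∈ S) (x y : M) :
    ∑ a ∈ S, (if a = 0 then x else y) = x + (#S - 1) • y := by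
  rw [← add_sum_erase S _ h0, if_pos rfl,
    sum_congr rfl fun a ha => if_neg (ne_of_mem_erase ha), sum_const, card_erase_of_mem h0]

variable {s : ℕ} (M : Matrix (Fin (21 * s)) (Fin 3) F4)

theorem rows_ne_zero_and_card_filter_eq (hZ : ∀ a ≠ 0, #{i | M i ⬝ᵥ a = 0} ≤ 5 * s) :
    (∀ i, M i ≠ 0) ∧ ∀ a, #{i | M i ⬝ᵥ a = 0} = if a = 0 then 21 * s else 5 * s := by
  have hle : ∀ a ∈ univ, #{i | M i ⬝ᵥ a = 0} ≤ if a = 0 then 21 * s else 5 * s := by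
    intro a _
    split_ifs with ha
    · exact (card_filter_le _ _).trans (by simp)
    · exact hZ a ha
  have hbound : ∑ a : Fin 3 → F4, (if a = 0 then 21 * s else 5 * s) = 21 * s + 63 * (5 * s) := by
    rw [sum_ite_eq_zero_of_mem (mem_univ 0), card_univ, Fintype.card_fun, F4.card_eq_four]
    rfl
  have hcount : ∑ a : Fin 3 → F4, #{i | M i ⬝ᵥ a = 0} = 16 * (21 * s) + 48 * #{i | M i = 0} := by
    rw [sum_card_filter_comm]
    have hcol : ∀ v : Fin 3 → F4, #{a | v ⬝ᵥ a = 0} = 16 + 48 * if v = 0 then 1 else 0 := by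
      intro v
      rw [card_filter_dotProduct_eq_zero, F4.card_eq_four]
      split_ifs <;> rfl
    simp only [hcol, sum_add_distrib, ← mul_sum, card_filter, sum_const, card_univ,
      Fintype.card_fin, smul_eq_mul, mul_comm]
    congr!
  have hsum := sum_le_sum hle
  have hzero : #{i | M i = 0} = 0 := by omega
  refine ⟨fun i hi => ?_, fun a => (sum_eq_sum_iff_of_le hle).mp (by omega) a (mem_univ a)⟩
  exact (filter_eq_empty_iff.mp (card_eq_zero.mp hzero)) (mem_univ i) hi

theorem card_filter_mem_span_eq
    (hZ : ∀ a, #{i | M i ⬝ᵥ a = 0} = if a = 0 then 21 * s else 5 * s)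
    {y : Fin 3 → F4} (hy : y ≠ 0) : #{i | M i ∈ F4 ∙ y} = s := by
  have hS : #{a | y ⬝ᵥ a = 0} = 16 := by
    rw [card_filter_dotProduct_eq_zero, if_neg hy, F4.card_eq_four]
    rfl
  have hbound : ∑ a ∈ {a | y ⬝ᵥ a = 0}, #{i | M i ⬝ᵥ a = 0} = 21 * s + 15 * (5 * s) := by
    rw [sum_congr rfl fun a _ => hZ a, sum_ite_eq_zero_of_mem (by simp), hS]
    rfl
  have hcol : ∀ v : Fin 3 → F4,
      #{a | y ⬝ᵥ a = 0 ∧ v ⬝ᵥ a = 0} = 4 + 12 * if v ∈ F4 ∙ y then 1 else 0 := by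
    intro v
    rw [card_filter_dotProduct_eq_zero_and hy, F4.card_eq_four]
    split_ifs <;> rfl
  have hcount : ∑ a ∈ {a | y ⬝ᵥ a = 0}, #{i | M i ⬝ᵥ a = 0} =
      4 * (21 * s) + 12 * #{i | M i ∈ F4 ∙ y} := by
    rw [sum_card_filter_comm]
    simp only [filter_filter, hcol, sum_add_distrib, ← mul_sum, card_filter, sum_const, card_univ,
      Fintype.card_fin, smul_eq_mul, mul_comm]
  omega

open Projectivization in
theorem sum_hermTerm_rows_eq_zero (hM : ∀ i, M i ≠ 0)
    (hQ : ∀ y ≠ 0, #{i | M i ∈ F4 ∙ y} = s) (a b : Fin 3 → F4) :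
    ∑ i, hermTerm a b (M i) = 0 := by
  have hfiber : ∀ p : ℙ F4 (Fin 3 → F4), #{i | mk F4 (M i) (hM i) = p} = s := by
    intro p
    refine Eq.trans (congrArg card (filter_congr fun i _ => ?_)) (hQ p.rep p.rep_nonzero)
    conv_lhs => rw [← mk_rep p]
    rw [mk_eq_mk_iff', mem_span_singleton]
  rw [sum_comp_eq_sum_card_smul_rep hM (hermTerm_units_smul a b)]
  simp only [hfiber, ← smul_sum, sum_rep_hermTerm_eq_zero, smul_zero]

end UpperBound

theorem exists_wt_le_of_isHermLCD (s : ℕ) (C : Submodule F4 (Fin (21 * s) → F4))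
    (hC : finrank F4 C = 3) (hlcd : IsHermLCD C) : ∃ x ∈ C, x ≠ 0 ∧ wt x ≤ 16 * s - 1 := by
  obtain ⟨M, rfl⟩ := exists_range_mulVecLin_eq C hC
  have hinj : Function.Injective M.mulVecLin :=
    LinearMap.injective_of_finrank_range_eq (hC.trans (finrank_fin_fun F4).symm)
  by_contra! hwt
  have hZ : ∀ a ≠ 0, #{i | M i ⬝ᵥ a = 0} ≤ 5 * s := by
    intro a ha
    have := hwt _ ⟨a, rfl⟩ ((map_ne_zero_iff _ hinj).mpr ha)
    have := M.wt_mulVec_add_card_filter a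
    rw [mulVecLin_apply] at *
    omega
  obtain ⟨hM, hZ⟩ := rows_ne_zero_and_card_filter_eq M hZ
  exact M.not_isHermLCD_range_mulVecLin hinj
    (sum_hermTerm_rows_eq_zero M hM fun y hy => card_filter_mem_span_eq M hZ hy) hlcd

theorem Fintype.sum_update_add {α M : Type*} [Fintype α] [DecidableEq α] [AddCommMonoid M]
    (f : α → M) (i : α) (b : M) : ∑ x, Function.update f i b x + f i = ∑ x, f x + b := by
  rw [sum_update_of_mem (mem_univ i), sum_eq_add_sum_sdiff_singleton_of_mem (mem_univ i) f]
  abel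

section Construction

open Projectivization

noncomputable def modifiedRep : ℙ F4 (Fin 3 → F4) → Fin 3 → F4 :=
  Function.update (Function.update (fun p => p.rep) (mk F4 ![1, 1, 0] (by simp)) ![1, 0, 0])
    (mk F4 ![0, 0, 1] (by simp)) ![0, 1, 0]

theorem sum_modifiedRep {M : Type*} [AddCommMonoid M] {φ : (Fin 3 → F4) → M}
    (hφ : ∀ (c : F4ˣ) v, φ (c • v) = φ v) :
    ∑ p, φ (modifiedRep p) + φ ![1, 1, 0] + φ ![0, 0, 1] =
      ∑ p : ℙ F4 (Fin 3 → F4), φ p.rep + φ ![1, 0, 0] + φ ![0, 1, 0] := by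
  set P₁ : ℙ F4 (Fin 3 → F4) := mk F4 ![1, 1, 0] (by simp)
  set P₂ : ℙ F4 (Fin 3 → F4) := mk F4 ![0, 0, 1] (by simp)
  set g : ℙ F4 (Fin 3 → F4) → M := fun p => φ p.rep
  have hne : P₂ ≠ P₁ := by
    rw [Ne, mk_eq_mk_iff']
    rintro ⟨c, hc⟩
    simpa using congrFun hc 2
  have hmod : ∀ p, φ (modifiedRep p) =
      Function.update (Function.update g P₁ (φ ![1, 0, 0])) P₂ (φ ![0, 1, 0]) p := by
    intro p
    simp only [modifiedRep, Function.update_apply]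
    split_ifs <;> rfl
  have h₁ := Fintype.sum_update_add g P₁ (φ ![1, 0, 0])
  have h₂ := Fintype.sum_update_add (Function.update g P₁ (φ ![1, 0, 0])) P₂ (φ ![0, 1, 0])
  rw [Function.update_of_ne hne] at h₂
  rw [← comp_rep_mk hφ (v := ![1, 1, 0]) (by simp), ← comp_rep_mk hφ (v := ![0, 0, 1]) (by simp),
    sum_congr rfl fun p _ => hmod p, add_right_comm, h₂, add_right_comm, h₁]

variable (t : ℕ)

noncomputable def columns : ℙ F4 (Fin 3 → F4) ⊕ ℙ F4 (Fin 3 → F4) × Fin t → Fin 3 → F4 :=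
  Sum.elim modifiedRep fun x => x.1.rep

theorem sum_columns {M : Type*} [AddCommMonoid M] {φ : (Fin 3 → F4) → M}
    (hφ : ∀ (c : F4ˣ) v, φ (c • v) = φ v) :
    ∑ x, φ (columns t x) + φ ![1, 1, 0] + φ ![0, 0, 1] =
      (t + 1) • ∑ p : ℙ F4 (Fin 3 → F4), φ p.rep + φ ![1, 0, 0] + φ ![0, 1, 0] := by
  simp only [columns, Fintype.sum_sum_type, Sum.elim_inl, Sum.elim_inr, Fintype.sum_prod_type,
    sum_const, card_univ, Fintype.card_fin, ← smul_sum]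
  calc _ = (∑ p, φ (modifiedRep p) + φ ![1, 1, 0] + φ ![0, 0, 1]) +
        t • ∑ p : ℙ F4 (Fin 3 → F4), φ p.rep := by abel
    _ = _ := by rw [sum_modifiedRep hφ, succ_nsmul']; abel

theorem card_columns :
    Fintype.card (ℙ F4 (Fin 3 → F4) ⊕ ℙ F4 (Fin 3 → F4) × Fin t) = 21 * (t + 1) := by
  simp only [Fintype.card_sum, Fintype.card_prod, F4.card_projectivization, Fintype.card_fin]
  ring

noncomputable def codeMatrix : Matrix (Fin (21 * (t + 1))) (Fin 3) F4 :=
  of fun i => columns t ((Fintype.equivFinOfCardEq (card_columns t)).symm i)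

theorem sum_codeMatrix {M : Type*} [AddCommMonoid M] {φ : (Fin 3 → F4) → M}
    (hφ : ∀ (c : F4ˣ) v, φ (c • v) = φ v) :
    ∑ i, φ (codeMatrix t i) + φ ![1, 1, 0] + φ ![0, 0, 1] =
      (t + 1) • ∑ p : ℙ F4 (Fin 3 → F4), φ p.rep + φ ![1, 0, 0] + φ ![0, 1, 0] := by
  rw [← sum_columns t hφ, codeMatrix]
  congr 2
  exact (Fintype.equivFinOfCardEq (card_columns t)).symm.sum_comp (fun x => φ (columns t x))

theorem dotProduct_vec3 (x y z : F4) (a : Fin 3 → F4) :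
    ![x, y, z] ⬝ᵥ a = x * a 0 + y * a 1 + z * a 2 := by
  rw [vec3_dotProduct]
  rfl

theorem card_filter_codeMatrix_add {a : Fin 3 → F4} (ha : a ≠ 0) :
    #{i | codeMatrix t i ⬝ᵥ a = 0} + (if a 0 + a 1 = 0 then 1 else 0) +
        (if a 2 = 0 then 1 else 0) =
      5 * (t + 1) + (if a 0 = 0 then 1 else 0) + (if a 1 = 0 then 1 else 0) := by
  have h := sum_codeMatrix t (φ := fun v => if v ⬝ᵥ a = 0 then 1 else 0) fun c v => by
    simp [Units.smul_def, smul_dotProduct]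
  simp only [← card_filter, card_filter_rep_dotProduct_eq_zero ha, smul_eq_mul, dotProduct_vec3,
    one_mul, zero_mul, add_zero, zero_add] at h
  rwa [Nat.mul_comm (t + 1) 5] at h

theorem card_filter_codeMatrix_le {a : Fin 3 → F4} (ha : a ≠ 0) :
    #{i | codeMatrix t i ⬝ᵥ a = 0} ≤ 5 * (t + 1) + 1 := by
  have h := card_filter_codeMatrix_add t ha
  by_cases h₀ : a 0 = 0 <;> by_cases h₁ : a 1 = 0 <;>
    simp only [h₀, h₁, zero_add, add_zero, ↓reduceIte] at h <;> split_ifs at h <;> omega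

theorem card_filter_codeMatrix_single_two :
    #{i | codeMatrix t i ⬝ᵥ ![0, 0, 1] = 0} = 5 * (t + 1) + 1 := by
  have h := card_filter_codeMatrix_add t (a := ![0, 0, 1]) (by simp)
  simpa [dotProduct_vec3] using h

theorem sum_hermTerm_codeMatrix (a b : Fin 3 → F4) :
    ∑ i, hermTerm a b (codeMatrix t i) = a 0 * b 1 ^ 2 + a 1 * b 0 ^ 2 + a 2 * b 2 ^ 2 := by
  have h := sum_codeMatrix t (hermTerm_units_smul a b)
  rw [sum_rep_hermTerm_eq_zero, smul_zero, zero_add] at h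
  simp only [hermTerm, dotProduct_vec3] at h ⊢
  linear_combination h - (a 0 * b 1 ^ 2 + a 1 * b 0 ^ 2 + (a 0 + a 1) * b 0 * b 1 +
    a 2 * b 2 ^ 2) * CharTwo.two_eq_zero (R := F4)

theorem codeMatrix_nondegenerate (a : Fin 3 → F4)
    (h : ∀ b, ∑ i, hermTerm a b (codeMatrix t i) = 0) : a = 0 := by
  simp only [sum_hermTerm_codeMatrix] at h
  have h₀ : a 0 = 0 := by simpa using h ![0, 1, 0]
  have h₁ : a 1 = 0 := by simpa using h ![1, 0, 0]
  have h₂ : a 2 = 0 := by simpa using h ![0, 0, 1]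
  ext j
  fin_cases j <;> assumption

theorem exists_isHermLCDCode : ∃ C : Submodule F4 (Fin (21 * (t + 1)) → F4),
    IsHermLCDCode (21 * (t + 1)) 3 (16 * (t + 1) - 1) C := by
  have hinj := (codeMatrix t).injective_mulVecLin_of_nondegenerate (codeMatrix_nondegenerate t)
  refine ⟨LinearMap.range (codeMatrix t).mulVecLin, ?_,
    (codeMatrix t).isHermLCD_range_mulVecLin_of_nondegenerate (codeMatrix_nondegenerate t),
    ⟨?_, ?_⟩⟩
  · rw [LinearMap.finrank_range_of_inj hinj, finrank_fin_fun]
  · refine ⟨codeMatrix t *ᵥ ![0, 0, 1], ⟨_, rfl⟩, (map_ne_zero_iff _ hinj).mpr (by simp), ?_⟩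
    have := (codeMatrix t).wt_mulVec_add_card_filter ![0, 0, 1]
    rw [card_filter_codeMatrix_single_two] at this
    omega
  · rintro _ ⟨a, rfl⟩ hx
    have ha : a ≠ 0 := by
      rintro rfl
      exact hx (map_zero _)
    have := (codeMatrix t).wt_mulVec_add_card_filter a
    have := card_filter_codeMatrix_le t ha
    rw [mulVecLin_apply]
    omega

end Construction

/-- `d₄(21s, 3) = 16s - 1` for every positive integer `s`. -/
theorem stmt16 (s : ℕ) (hs : 1 ≤ s) : d4Is (21 * s) 3 (16 * s - 1) := by
  obtain ⟨t, rfl⟩ := Nat.exists_eq_add_of_le' hs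
  exact ⟨exists_isHermLCDCode t, fun C hC hlcd => exists_wt_le_of_isHermLCD _ C hC hlcd⟩
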